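/- arXiv:math/0106231 — 3 statements merged into one kernel-verified Lean document; each statement's English description precedes it below -/
import Mathlib

section
/- Let N > p > 1, γ ≥ 0, and q > (N+γ)(p−1)/(N−p). Then there exist constants C > 0 and α > 0 such that the function g(r) = C(1+r)^{−α} satisfies, for every r > 0, the differential inequality −|g'(r)|^{p−2} ( (p−1) g''(r) + ((N−1)/r) g'(r) ) ≥ r^γ · g(r)^q. In particular, the positive bounded radial function Γ(x) = g(|x|) on ℝ^N satisfies −Δ_p Γ(x) ≥ |x|^γ Γ(x)^q classically at every x ≠ 0. -/
/-!
For `g(r) = C(1+r)^{-α}` the radial operator is explicit: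
`-|g'|^{p-2}((p-1)g'' + ((N-1)/r)g')
  = (Cα)^{p-1} (1+r)^{-(α+1)(p-1)-1} ((N-1)(1+r)/r - (p-1)(α+1))`,
and since `(1+r)/r ≥ 1` the last factor is at least `ε = N - p - (p-1)α`. The choice
`α = (γ+p)/(q-p+1)` gives the bound `r^γ g^q ≤ C^q (1+r)^{γ-αq}` the same decay rate, and `q`
above the critical exponent is exactly what makes `ε > 0`. Finally `C` is fixed by
`C^q = (Cα)^{p-1} ε`, which is solvable because `q ≠ p - 1`.
-/

open Topology

noncomputable section

def criticalExponent (n p γ : ℝ) : ℝ := (n + γ) * (p - 1) / (n - p)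

def radialPLaplacian (n p : ℝ) (g : ℝ → ℝ) (r : ℝ) : ℝ :=
  |deriv g r| ^ (p - 2) * ((p - 1) * deriv (deriv g) r + ((n - 1) / r) * deriv g r)

def powerProfile (C a s : ℝ) : ℝ := C * (1 + s) ^ a

section Exponents

variable {n p γ q : ℝ}

theorem sub_one_lt_of_criticalExponent_lt (hp : 1 < p) (hpn : p < n) (hγ : 0 ≤ γ)
    (hq : criticalExponent n p γ < q) : p - 1 < q := by
  refine lt_of_le_of_lt ?_ hq
  rw [criticalExponent, le_div_iff₀ (by linarith)]
  nlinarith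

theorem exists_decay_exponent (hp : 1 < p) (hpn : p < n) (hγ : 0 ≤ γ)
    (hq : criticalExponent n p γ < q) :
    ∃ α > 0, (p - 1) * α < n - p ∧ γ - α * q = -(α + 1) * (p - 1) - 1 := by
  have hqp : 0 < q - (p - 1) :=
    sub_pos.2 (sub_one_lt_of_criticalExponent_lt hp hpn hγ hq)
  have hq' : (n + γ) * (p - 1) < q * (n - p) := by
    rwa [criticalExponent, div_lt_iff₀ (by linarith)] at hq
  refine ⟨(γ + p) / (q - (p - 1)), div_pos (by linarith) hqp, ?_, ?_⟩
  · rw [← mul_div_assoc, div_lt_iff₀ hqp]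
    nlinarith
  · field_simp
    ring

end Exponents

theorem exists_rpow_eq_mul_rpow_mul {p q α ε : ℝ} (hα : 0 < α) (hε : 0 < ε)
    (hqp : q ≠ p - 1) :
    ∃ C > 0, C ^ q = (C * α) ^ (p - 1) * ε := by
  have hX : 0 < α ^ (p - 1) * ε := by positivity
  have hk : q - (p - 1) ≠ 0 := sub_ne_zero.2 hqp
  set C := (α ^ (p - 1) * ε) ^ (q - (p - 1))⁻¹
  have hC : 0 < C := by positivity
  have hCk : C ^ (q - (p - 1)) = α ^ (p - 1) * ε := by
    rw [← Real.rpow_mul hX.le, inv_mul_cancel₀ hk, Real.rpow_one]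
  refine ⟨C, hC, ?_⟩
  rw [Real.mul_rpow hC.le hα.le, mul_assoc, ← hCk, ← Real.rpow_add hC]
  ring_nf

section PowerProfile

variable {C a s : ℝ}

theorem hasDerivAt_powerProfile (hs : -1 < s) :
    HasDerivAt (powerProfile C a) (powerProfile (C * a) (a - 1) s) s := by
  have h := ((Real.hasDerivAt_rpow_const (p := a) (Or.inl (by linarith : 1 + s ≠ 0))).comp s
    ((hasDerivAt_id s).const_add 1)).const_mul C
  exact h.congr_deriv (by rw [powerProfile]; ring)

theorem deriv_powerProfile_eventuallyEq (hs : -1 < s) :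
    deriv (powerProfile C a) =ᶠ[𝓝 s] powerProfile (C * a) (a - 1) := by
  filter_upwards [eventually_gt_nhds hs] with t ht
  exact (hasDerivAt_powerProfile ht).deriv

theorem deriv_deriv_powerProfile (hs : -1 < s) :
    deriv (deriv (powerProfile C a)) s = powerProfile (C * a * (a - 1)) (a - 1 - 1) s := by
  rw [(deriv_powerProfile_eventuallyEq hs).deriv_eq, (hasDerivAt_powerProfile hs).deriv]

theorem rpow_mul_powerProfile_rpow_le {γ q r : ℝ} (hC : 0 ≤ C) (hr : 0 ≤ r)
    (hγ : 0 ≤ γ) :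
    r ^ γ * powerProfile C a r ^ q ≤ C ^ q * (1 + r) ^ (γ + a * q) := by
  have h1r : 0 < 1 + r := by linarith
  calc r ^ γ * powerProfile C a r ^ q ≤ (1 + r) ^ γ * powerProfile C a r ^ q := by
        gcongr
        · exact Real.rpow_nonneg (mul_nonneg hC (Real.rpow_nonneg h1r.le _)) _
        · linarith
    _ = C ^ q * (1 + r) ^ (γ + a * q) := by
        rw [powerProfile, Real.mul_rpow hC (by positivity), ← Real.rpow_mul h1r.le,
          Real.rpow_add h1r]
        ring

end PowerProfile

theorem neg_radialPLaplacian_powerProfile {n p C α r : ℝ} (hC : 0 < C) (hα : 0 < α)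
    (hr : 0 < r) :
    -radialPLaplacian n p (powerProfile C (-α)) r =
      (C * α) ^ (p - 1) * (1 + r) ^ (-(α + 1) * (p - 1) - 1) *
        ((n - 1) * ((1 + r) / r) - (p - 1) * (α + 1)) := by
  have hs : -1 < r := by linarith
  have h1r : 0 < 1 + r := by linarith
  have hK : 0 < C * α := mul_pos hC hα
  have habs : |deriv (powerProfile C (-α)) r| = C * α * (1 + r) ^ (-α - 1) := by
    rw [(hasDerivAt_powerProfile hs).deriv, powerProfile, abs_of_neg]
    · ring
    · have := Real.rpow_pos_of_pos h1r (-α - 1)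
      nlinarith
  have e1 : (C * α) ^ (p - 1) = (C * α) ^ (p - 2) * (C * α) := by
    rw [show p - 1 = (p - 2) + 1 by ring, Real.rpow_add hK, Real.rpow_one]
  have e2 : (1 + r) ^ (-(α + 1) * (p - 1) - 1)
      = ((1 + r) ^ (-α - 1)) ^ (p - 2) * (1 + r) ^ (-α - 1 - 1) := by
    rw [← Real.rpow_mul h1r.le, ← Real.rpow_add h1r]
    ring_nf
  have e3 : (1 + r) ^ (-α - 1) = (1 + r) ^ (-α - 1 - 1) * (1 + r) := by
    rw [← Real.rpow_add_one h1r.ne']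
    ring_nf
  rw [radialPLaplacian, habs, (hasDerivAt_powerProfile hs).deriv, deriv_deriv_powerProfile hs,
    Real.mul_rpow hK.le (by positivity), e1, e2]
  simp only [powerProfile]
  rw [e3]
  field_simp
  ring

theorem sub_le_mul_one_add_div_sub {n p α r : ℝ} (hn : 1 ≤ n) (hr : 0 < r) :
    n - p - (p - 1) * α ≤ (n - 1) * ((1 + r) / r) - (p - 1) * (α + 1) := by
  have h : 1 ≤ (1 + r) / r := by rw [le_div_iff₀ hr]; linarith
  nlinarith

/-- Counterexample showing optimality of the exponent `(N+γ)(p-1)/(N-p)`: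
for `q > (N+γ)(p-1)/(N-p)` the radial profile `g(r) = C(1+r)^{-α}` satisfies
`-|g'|^{p-2}((p-1)g'' + ((N-1)/r) g') ≥ r^γ g^q` for all `r > 0`, i.e. the radial
function `Γ(x) = g(|x|)` satisfies `-Δ_p Γ ≥ |x|^γ Γ^q` classically away from the origin. -/
theorem counterexample_supercritical
    (N : ℕ) (p γ q : ℝ) (hp : 1 < p) (hpN : p < N) (hγ : 0 ≤ γ)
    (hq : ((N : ℝ) + γ) * (p - 1) / ((N : ℝ) - p) < q) :
    ∃ C : ℝ, 0 < C ∧ ∃ α : ℝ, 0 < α ∧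
      ∀ r : ℝ, 0 < r →
        r ^ γ * (C * (1 + r) ^ (-α)) ^ q ≤
          -(|deriv (fun s : ℝ => C * (1 + s) ^ (-α)) r| ^ (p - 2) *
            ((p - 1) * deriv (deriv (fun s : ℝ => C * (1 + s) ^ (-α))) r +
              (((N : ℝ) - 1) / r) * deriv (fun s : ℝ => C * (1 + s) ^ (-α)) r)) := by
  obtain ⟨α, hα, hαN, hexp⟩ := exists_decay_exponent hp hpN hγ hq
  obtain ⟨C, hC, hCq⟩ := exists_rpow_eq_mul_rpow_mul hα (sub_pos.2 hαN)
    (sub_one_lt_of_criticalExponent_lt hp hpN hγ hq).ne'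
  refine ⟨C, hC, α, hα, fun r hr => ?_⟩
  change r ^ γ * powerProfile C (-α) r ^ q ≤ -radialPLaplacian N p (powerProfile C (-α)) r
  rw [neg_radialPLaplacian_powerProfile hC hα hr]
  calc r ^ γ * powerProfile C (-α) r ^ q ≤ C ^ q * (1 + r) ^ (γ + -α * q) :=
        rpow_mul_powerProfile_rpow_le hC.le hr.le hγ
    _ = (C * α) ^ (p - 1) * (1 + r) ^ (-(α + 1) * (p - 1) - 1) * (N - p - (p - 1) * α) := by
        rw [hCq, neg_mul, ← sub_eq_add_neg, hexp]
        ring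
    _ ≤ _ := mul_le_mul_of_nonneg_left
        (sub_le_mul_one_add_div_sub (by linarith) hr) (by positivity)
end
end

section
/- Let N > p > 1, γ ≥ 0 and q > p − 1. Suppose V : [0,∞) → ℝ is positive, C¹ on (0,∞), and satisfies r^{N−1} |V'(r)|^{p−2} V'(r) = − ∫₀^r s^{N−1+γ} V(s)^q ds for all r > 0, and V is nonincreasing. Then there exists a constant C > 0 such that V(r) ≤ C · r^{−(γ+p)/(q−p+1)} for all r > 0. -/
/-!
Integrating the equation against the monotonicity of `V` gives
`r^{N-1} (-V')^{p-1} ≥ V(r)^q r^{N+γ} / (N+γ)`, i.e. `-V' ≥ b r^δ V^m` with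
`δ = (1+γ)/(p-1)` and `m = q/(p-1) > 1`. Hence `(V^{1-m})' ≥ (m-1) b r^δ`, and the mean value
theorem on `[r/2, r]` yields `V(r)^{1-m} ≥ c r^{δ+1}`: this is the claimed decay, because
`(δ+1)/(m-1) = (γ+p)/(q-p+1)`.
-/

open Real Set MeasureTheory intervalIntegral

lemma mul_rpow_div_le_integral_rpow_mul {f : ℝ → ℝ} {c s : ℝ} (hc : 0 ≤ c) (hs : 0 ≤ s)
    (hf : AntitoneOn f (Icc 0 s)) :
    f s * (s ^ (c + 1) / (c + 1)) ≤ ∫ t in (0 : ℝ)..s, t ^ c * f t := by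
  have hpow : ContinuousOn (fun t : ℝ => t ^ c) (uIcc 0 s) :=
    (continuous_id.rpow_const fun _ => Or.inr hc).continuousOn
  have hconst : ∫ t in (0 : ℝ)..s, f s * t ^ c = f s * (s ^ (c + 1) / (c + 1)) := by
    rw [intervalIntegral.integral_const_mul, integral_rpow (Or.inl (by linarith)),
      zero_rpow (by linarith), sub_zero]
  rw [← hconst]
  refine integral_mono_on hs (hpow.intervalIntegrable.const_mul _) ?_ fun t ht => ?_
  · rw [← uIcc_of_le hs] at hf
    exact hf.intervalIntegrable.continuousOn_mul hpow
  · rw [mul_comm]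
    exact mul_le_mul_of_nonneg_left (hf ht ⟨hs, le_rfl⟩ ht.2) (rpow_nonneg ht.1 c)

lemma neg_pos_and_le_rpow_of_abs_rpow_mul_le {x p K : ℝ} (hK : 0 < K)
    (h : |x| ^ (p - 2) * x ≤ -K) : 0 < -x ∧ K ≤ (-x) ^ (p - 1) := by
  have hx : x < 0 := by
    by_contra! hx
    nlinarith [mul_nonneg (rpow_nonneg (abs_nonneg x) (p - 2)) hx]
  refine ⟨neg_pos.2 hx, ?_⟩
  rw [abs_of_neg hx] at h
  rw [show p - 1 = p - 2 + 1 by ring, rpow_add (neg_pos.2 hx), rpow_one]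
  linarith

lemma rpow_inv_mul_rpow_div_le {A B x k q : ℝ} (hA : 0 ≤ A) (hB : 0 ≤ B) (hx : 0 ≤ x)
    (hk : 0 < k) (h : A ^ q * B ≤ x ^ k) : B ^ k⁻¹ * A ^ (q / k) ≤ x :=
  calc B ^ k⁻¹ * A ^ (q / k) = (A ^ q * B) ^ k⁻¹ := by
        rw [mul_rpow (rpow_nonneg hA q) hB, ← rpow_mul hA, div_eq_mul_inv, mul_comm]
    _ ≤ (x ^ k) ^ k⁻¹ := rpow_le_rpow (by positivity) h (by positivity)
    _ = x := rpow_rpow_inv hx hk.ne'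

lemma le_neg_deriv_of_radial_integral_eq {V : ℝ → ℝ} {n γ p q s : ℝ} (hc : 0 ≤ n - 1 + γ)
    (hp : 1 < p) (hq : 0 ≤ q) (hs : 0 < s) (hVpos : ∀ t ∈ Icc 0 s, 0 < V t)
    (hmono : AntitoneOn V (Icc 0 s))
    (heq : s ^ (n - 1) * |deriv V s| ^ (p - 2) * deriv V s =
      -∫ t in (0 : ℝ)..s, t ^ (n - 1 + γ) * V t ^ q) :
    (s ^ (1 + γ) / (n + γ)) ^ (p - 1)⁻¹ * V s ^ (q / (p - 1)) ≤ -deriv V s := by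
  have hVs := hVpos s ⟨hs.le, le_rfl⟩
  have hnγ : 0 < n + γ := by linarith
  have hK : 0 < V s ^ q * (s ^ (1 + γ) / (n + γ)) := by positivity
  have hint := mul_rpow_div_le_integral_rpow_mul (f := fun t => V t ^ q) hc hs.le
    fun x hx y hy hxy => rpow_le_rpow (hVpos y hy).le (hmono hx hy hxy) hq
  have hsplit :
      s ^ (n - 1 + γ + 1) / (n - 1 + γ + 1) = s ^ (n - 1) * (s ^ (1 + γ) / (n + γ)) := by
    rw [← mul_div_assoc, ← rpow_add hs]
    ring_nf
  have hφ : |deriv V s| ^ (p - 2) * deriv V s ≤ -(V s ^ q * (s ^ (1 + γ) / (n + γ))) := by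
    refine le_of_mul_le_mul_left ?_ (rpow_pos_of_pos hs (n - 1))
    rw [hsplit] at hint
    linarith
  obtain ⟨hd, hle⟩ := neg_pos_and_le_rpow_of_abs_rpow_mul_le hK hφ
  exact rpow_inv_mul_rpow_div_le hVs.le (by positivity) hd.le (by linarith) hle

section Decay

variable {V : ℝ → ℝ} {b δ m : ℝ}

lemma le_deriv_rpow_one_sub (hpos : ∀ s, 0 < s → 0 < V s)
    (hdiff : DifferentiableOn ℝ V (Ioi 0))
    (hV' : ∀ s, 0 < s → b * s ^ δ * V s ^ m ≤ -deriv V s) (hm : 1 ≤ m) {s : ℝ} (hs : 0 < s) :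
    (m - 1) * (b * s ^ δ) ≤ deriv (fun t => V t ^ (1 - m)) s := by
  have hVs := hpos s hs
  have hV's := (hdiff.differentiableAt (Ioi_mem_nhds hs)).hasDerivAt
  rw [(hV's.rpow_const (Or.inl hVs.ne')).deriv]
  have hcancel : V s ^ (-m) * V s ^ m = 1 := by
    rw [← rpow_add hVs, neg_add_cancel, rpow_zero]
  calc (m - 1) * (b * s ^ δ) = (m - 1) * V s ^ (-m) * (b * s ^ δ * V s ^ m) := by
        linear_combination (m - 1) * (b * s ^ δ) * hcancel.symm
    _ ≤ (m - 1) * V s ^ (-m) * -deriv V s :=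
        mul_le_mul_of_nonneg_left (hV' s hs) (by have := rpow_pos_of_pos hVs (-m); nlinarith)
    _ = deriv V s * (1 - m) * V s ^ (1 - m - 1) := by rw [show 1 - m - 1 = -m by ring]; ring

lemma mul_rpow_half_le_rpow_one_sub (hb : 0 ≤ b) (hδ : 0 ≤ δ) (hm : 1 ≤ m)
    (hpos : ∀ s, 0 < s → 0 < V s) (hdiff : DifferentiableOn ℝ V (Ioi 0))
    (hV' : ∀ s, 0 < s → b * s ^ δ * V s ^ m ≤ -deriv V s) {r : ℝ} (hr : 0 < r) :
    (m - 1) * b * (r / 2) ^ (δ + 1) ≤ V r ^ (1 - m) := by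
  have hr2 : 0 < r / 2 := half_pos hr
  have hF : DifferentiableOn ℝ (fun t => V t ^ (1 - m)) (Icc (r / 2) r) :=
    (hdiff.rpow_const fun t ht => Or.inl (hpos t ht).ne').mono
      fun t ht => hr2.trans_le ht.1
  have hslope : ∀ t ∈ interior (Icc (r / 2) r),
      (m - 1) * (b * (r / 2) ^ δ) ≤ deriv (fun t => V t ^ (1 - m)) t := by
    intro t ht
    rw [interior_Icc] at ht
    refine le_trans ?_ (le_deriv_rpow_one_sub hpos hdiff hV' hm (hr2.trans ht.1))
    gcongr
    exact ht.1.le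
  have hmvt := (convex_Icc (r / 2) r).mul_sub_le_image_sub_of_le_deriv hF.continuousOn
    (hF.mono interior_subset) hslope (r / 2) ⟨le_rfl, half_le_self hr.le⟩ r
    ⟨half_le_self hr.le, le_rfl⟩ (half_le_self hr.le)
  have hVr2 : 0 < V (r / 2) ^ (1 - m) := rpow_pos_of_pos (hpos _ hr2) _
  calc (m - 1) * b * (r / 2) ^ (δ + 1) = (m - 1) * (b * (r / 2) ^ δ) * (r - r / 2) := by
        rw [rpow_add_one hr2.ne']
        ring
    _ ≤ V r ^ (1 - m) := by linarith

lemma exists_le_mul_rpow_of_le_neg_deriv (hb : 0 < b) (hδ : 0 ≤ δ) (hm : 1 < m)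
    (hpos : ∀ s, 0 < s → 0 < V s) (hdiff : DifferentiableOn ℝ V (Ioi 0))
    (hV' : ∀ s, 0 < s → b * s ^ δ * V s ^ m ≤ -deriv V s) :
    ∃ C, 0 < C ∧ ∀ r, 0 < r → V r ≤ C * r ^ (-(δ + 1) / (m - 1)) := by
  have hm1 : 0 < m - 1 := by linarith
  have hK : 0 < (m - 1) * b := mul_pos hm1 hb
  refine ⟨((m - 1) * b) ^ (-(m - 1)⁻¹) * 2 ^ ((δ + 1) * (m - 1)⁻¹), by positivity,
    fun r hr => ?_⟩
  have hVr := hpos r hr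
  have hlow := mul_rpow_half_le_rpow_one_sub hb.le hδ hm.le hpos hdiff hV' hr
  calc V r = (V r ^ (1 - m)) ^ (-(m - 1)⁻¹) := by
        rw [← rpow_mul hVr.le, show (1 - m) * -(m - 1)⁻¹ = 1 by field_simp; ring, rpow_one]
    _ ≤ ((m - 1) * b * (r / 2) ^ (δ + 1)) ^ (-(m - 1)⁻¹) :=
        rpow_le_rpow_of_nonpos (by positivity) hlow (neg_nonpos.2 (inv_pos.2 hm1).le)
    _ = ((m - 1) * b) ^ (-(m - 1)⁻¹) * 2 ^ ((δ + 1) * (m - 1)⁻¹) *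
          r ^ (-(δ + 1) / (m - 1)) := by
        rw [mul_rpow hK.le (by positivity), ← rpow_mul (by positivity),
          div_rpow hr.le zero_le_two, div_eq_mul_inv (r ^ _), ← rpow_neg zero_le_two]
        ring_nf

end Decay

/-- Decay estimate for radial solutions: if `V > 0`, `V` nonincreasing, and
`r^{N-1}|V'|^{p-2}V' = -∫₀^r s^{N-1+γ}V^q`, then `V(r) ≤ C r^{-(γ+p)/(q-p+1)}`. -/
theorem radial_solution_decay
    (N : ℕ) (p γ q : ℝ) (hp : 1 < p) (hpN : p < N) (hγ : 0 ≤ γ) (hq : p - 1 < q)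
    (V : ℝ → ℝ)
    (hVpos : ∀ r : ℝ, 0 ≤ r → 0 < V r)
    (hV : ContDiffOn ℝ 1 V (Set.Ioi (0 : ℝ)))
    (hmono : AntitoneOn V (Set.Ici (0 : ℝ)))
    (heq : ∀ r : ℝ, 0 < r →
      r ^ ((N : ℝ) - 1) * |deriv V r| ^ (p - 2) * deriv V r =
        -∫ s in (0 : ℝ)..r, s ^ ((N : ℝ) - 1 + γ) * V s ^ q) :
    ∃ C : ℝ, 0 < C ∧ ∀ r : ℝ, 0 < r → V r ≤ C * r ^ (-(γ + p) / (q - p + 1)) := by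
  have hp1 : 0 < p - 1 := by linarith
  have hN : (1 : ℝ) < N := hp.trans hpN
  have hbound : ∀ s, 0 < s → (((N : ℝ) + γ) ^ (p - 1)⁻¹)⁻¹ * s ^ ((1 + γ) / (p - 1)) *
      V s ^ (q / (p - 1)) ≤ -deriv V s := by
    intro s hs
    have h := le_neg_deriv_of_radial_integral_eq (by linarith) hp (by linarith) hs
      (fun t ht => hVpos t ht.1) (hmono.mono Icc_subset_Ici_self) (heq s hs)
    rwa [div_rpow (by positivity) (by linarith), ← rpow_mul hs.le, ← div_eq_mul_inv,
      div_eq_inv_mul] at h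
  obtain ⟨C, hC, hdecay⟩ := exists_le_mul_rpow_of_le_neg_deriv (by positivity)
    (by positivity) ((one_lt_div hp1).2 (by linarith)) (fun s hs => hVpos s hs.le)
    (hV.differentiableOn one_ne_zero) hbound
  refine ⟨C, hC, fun r hr => (hdecay r hr).trans_eq ?_⟩
  congr 2
  field_simp
  ring
end

section
/- Let N > p > 1, γ ≥ 0 and q ≥ (N+γ)(p−1)/(N−p). Suppose V : [0,∞) → ℝ is positive, C¹ on (0,∞), nonincreasing, and satisfies r^{N−1} |V'(r)|^{p−2} V'(r) = − ∫₀^r s^{N−1+γ} V(s)^q ds for all r > 0. Then there exists a constant C > 0 such that |V'(r)| ≤ C · r^{−(γ+q+1)/(q−p+1)} for all r > 0. -/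
/-!
With `Φ(r) = r^{N-1} |V'(r)|^{p-1}`, the equation says that `V' < 0` and that `Φ(r)` equals
`∫₀^r s^{N-1+γ} V(s)^q ds`; this is nondecreasing in `r` and, `V` being nonincreasing, at least
`V(r)^q r^{N+γ} / (N+γ)`. Monotonicity of `Φ` gives `|V'(r)| ≤ 2^{(N-1)/(p-1)} |V'(s)|` for
`s ∈ [r, 2r]`, so the mean value theorem on `[r, 2r]` yields `r |V'(r)| ≤ c V(r)`. Inserting this
into the lower bound gives `V(r)^{q-p+1} ≤ C r^{-(γ+p)}`, where `q - p + 1 > 0` by the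
assumption on `q`, and then `|V'(r)| ≤ c V(r) / r` decays as claimed.
-/

open MeasureTheory Set

theorem AntitoneOn.rpow_const {s : Set ℝ} {g : ℝ → ℝ} {q : ℝ} (hg : AntitoneOn g s)
    (hg₀ : ∀ x ∈ s, 0 ≤ g x) (hq : 0 ≤ q) : AntitoneOn (fun x => g x ^ q) s :=
  fun _ hx _ hy hxy => Real.rpow_le_rpow (hg₀ _ hy) (hg hx hy hxy) hq

section AntitoneWeight

variable {a r : ℝ} {g : ℝ → ℝ}

theorem intervalIntegrable_rpow_mul_of_antitoneOn (ha : 0 ≤ a) (hr : 0 ≤ r)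
    (hg : AntitoneOn g (Icc 0 r)) : IntervalIntegrable (fun s => s ^ a * g s) volume 0 r := by
  rw [← uIcc_of_le hr] at hg
  exact hg.intervalIntegrable.continuousOn_mul (Real.continuous_rpow_const ha).continuousOn

theorem mul_rpow_div_le_integral_rpow_mul_s16 (ha : 0 ≤ a) (hr : 0 ≤ r)
    (hg : AntitoneOn g (Icc 0 r)) :
    g r * (r ^ (a + 1) / (a + 1)) ≤ ∫ s in (0 : ℝ)..r, s ^ a * g s := by
  have hmono : ∀ s ∈ Icc 0 r, g r * s ^ a ≤ s ^ a * g s := fun s hs => by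
    rw [mul_comm]
    exact mul_le_mul_of_nonneg_left (hg hs ⟨hr, le_rfl⟩ hs.2) (Real.rpow_nonneg hs.1 a)
  calc g r * (r ^ (a + 1) / (a + 1))
      = ∫ s in (0 : ℝ)..r, g r * s ^ a := by
        rw [intervalIntegral.integral_const_mul, integral_rpow (.inl (by linarith)),
          Real.zero_rpow (by linarith), sub_zero]
    _ ≤ ∫ s in (0 : ℝ)..r, s ^ a * g s :=
        intervalIntegral.integral_mono_on hr
          ((intervalIntegral.intervalIntegrable_rpow' (by linarith)).const_mul _)
          (intervalIntegrable_rpow_mul_of_antitoneOn ha hr hg) hmono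

end AntitoneWeight

noncomputable def weightedMass (a q : ℝ) (V : ℝ → ℝ) (r : ℝ) : ℝ :=
  ∫ s in (0 : ℝ)..r, s ^ a * V s ^ q

section WeightedMass

variable {a q : ℝ} {V : ℝ → ℝ}

theorem weightedMass_monotoneOn (ha : 0 ≤ a) (hq : 0 ≤ q) (hV₀ : ∀ r, 0 ≤ r → 0 ≤ V r)
    (hV : AntitoneOn V (Ici 0)) : MonotoneOn (weightedMass a q V) (Ici 0) := by
  intro r hr R hR hrR
  have hVq : AntitoneOn (fun s => V s ^ q) (Icc 0 R) :=
    (hV.rpow_const hV₀ hq).mono Icc_subset_Ici_self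
  refine intervalIntegral.integral_mono_interval le_rfl hr hrR ?_
    (intervalIntegrable_rpow_mul_of_antitoneOn ha hR hVq)
  filter_upwards [ae_restrict_mem measurableSet_Ioc] with s hs
  exact mul_nonneg (Real.rpow_nonneg hs.1.le a) (Real.rpow_nonneg (hV₀ s hs.1.le) q)

theorem rpow_mul_rpow_div_le_weightedMass (ha : 0 ≤ a) (hq : 0 ≤ q)
    (hV₀ : ∀ r, 0 ≤ r → 0 ≤ V r) (hV : AntitoneOn V (Ici 0)) {r : ℝ} (hr : 0 ≤ r) :
    V r ^ q * (r ^ (a + 1) / (a + 1)) ≤ weightedMass a q V r :=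
  mul_rpow_div_le_integral_rpow_mul_s16 ha hr
    ((hV.rpow_const hV₀ hq).mono Icc_subset_Ici_self)

end WeightedMass

theorem mul_abs_rpow_eq_of_mul_abs_rpow_mul_eq_neg {c x J p : ℝ} (hc : 0 < c)
    (hJ : 0 < J) (h : c * |x| ^ (p - 2) * x = -J) : c * |x| ^ (p - 1) = J := by
  have hx : x < 0 := by
    by_contra! hx
    have : 0 ≤ c * |x| ^ (p - 2) * x := by positivity
    linarith
  rw [show p - 1 = p - 2 + 1 by ring, Real.rpow_add_one (abs_pos.2 hx.ne).ne', abs_of_neg hx]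
  rw [abs_of_neg hx] at h
  linarith

theorem le_two_rpow_mul_of_rpow_mul_rpow_le {m p r s x y : ℝ} (hm : 0 ≤ m) (hp : 1 < p)
    (hr : 0 < r) (hs₀ : 0 ≤ s) (hs : s ≤ 2 * r) (hx : 0 ≤ x) (hy : 0 ≤ y)
    (h : r ^ m * x ^ (p - 1) ≤ s ^ m * y ^ (p - 1)) : x ≤ 2 ^ (m / (p - 1)) * y := by
  have hp₁ : 0 < p - 1 := by linarith
  have hpow : x ^ (p - 1) ≤ (2 ^ (m / (p - 1)) * y) ^ (p - 1) := by
    rw [Real.mul_rpow (by positivity) hy, ← Real.rpow_mul zero_le_two,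
      div_mul_cancel₀ _ hp₁.ne']
    refine le_of_mul_le_mul_left ?_ (Real.rpow_pos_of_pos hr m)
    calc r ^ m * x ^ (p - 1) ≤ s ^ m * y ^ (p - 1) := h
      _ ≤ (2 * r) ^ m * y ^ (p - 1) := by gcongr
      _ = r ^ m * (2 ^ m * y ^ (p - 1)) := by
        rw [Real.mul_rpow zero_le_two hr.le]; ring
  exact (Real.rpow_le_rpow_iff hx (by positivity) hp₁).1 hpow

theorem mul_abs_deriv_le_of_monotoneOn_flux {m p : ℝ} {V : ℝ → ℝ} (hm : 0 ≤ m) (hp : 1 < p)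
    (hVd : DifferentiableOn ℝ V (Ioi 0)) (hV₀ : ∀ r, 0 ≤ r → 0 ≤ V r)
    (hV : AntitoneOn V (Ici 0))
    (hflux : MonotoneOn (fun s => s ^ m * |deriv V s| ^ (p - 1)) (Ioi 0)) {r : ℝ} (hr : 0 < r) :
    r * |deriv V r| ≤ 2 ^ (m / (p - 1)) * V r := by
  have hsub : Icc r (2 * r) ⊆ Ioi 0 := fun x hx => hr.trans_le hx.1
  obtain ⟨ξ, hξ, hslope⟩ := exists_deriv_eq_slope V (by linarith : r < 2 * r)
    ((hVd.mono hsub).continuousOn) (hVd.mono (Ioo_subset_Icc_self.trans hsub))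
  have hξ₀ : 0 < ξ := hr.trans hξ.1
  have hcmp : |deriv V r| ≤ 2 ^ (m / (p - 1)) * |deriv V ξ| :=
    le_two_rpow_mul_of_rpow_mul_rpow_le hm hp hr hξ₀.le hξ.2.le (abs_nonneg _) (abs_nonneg _)
      (hflux hr hξ₀ hξ.1.le)
  have hdrop : r * |deriv V ξ| ≤ V r := by
    have hle : V (2 * r) ≤ V r := hV (mem_Ici.2 hr.le) (mem_Ici.2 (by linarith)) (by linarith)
    rw [hslope, show 2 * r - r = r by ring, abs_div, abs_of_pos hr,
      mul_div_cancel₀ _ hr.ne', abs_of_nonpos (by linarith)]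
    linarith [hV₀ (2 * r) (by linarith)]
  calc r * |deriv V r| ≤ r * (2 ^ (m / (p - 1)) * |deriv V ξ|) := by gcongr
    _ = 2 ^ (m / (p - 1)) * (r * |deriv V ξ|) := by ring
    _ ≤ 2 ^ (m / (p - 1)) * V r := by gcongr

theorem le_mul_rpow_of_rpow_mul_le {v r c K p q γ : ℝ} (hv : 0 < v) (hr : 0 < r) (hc : 0 ≤ c)
    (hK : 0 ≤ K) (hqp : p - 1 < q)
    (h : v ^ q * r ^ (γ + 1) ≤ K * (c * v / r) ^ (p - 1)) :
    v ≤ (K * c ^ (p - 1)) ^ (1 / (q - p + 1)) * r ^ (-(γ + p) / (q - p + 1)) := by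
  have hθ : 0 < q - p + 1 := by linarith
  have hpow : v ^ (q - p + 1) ≤ K * c ^ (p - 1) * r ^ (-(γ + p)) := by
    have hA : 0 < v ^ (p - 1) := Real.rpow_pos_of_pos hv _
    have hR : 0 < r ^ (p - 1) := Real.rpow_pos_of_pos hr _
    rw [Real.div_rpow (by positivity) hr.le, Real.mul_rpow hc hv.le,
      show q = q - p + 1 + (p - 1) by ring, Real.rpow_add hv] at h
    rw [Real.rpow_neg hr.le, le_mul_inv_iff₀ (Real.rpow_pos_of_pos hr _),
      show γ + p = γ + 1 + (p - 1) by ring, Real.rpow_add hr]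
    have key : v ^ (q - p + 1) * (r ^ (γ + 1) * r ^ (p - 1)) * v ^ (p - 1)
        ≤ K * c ^ (p - 1) * v ^ (p - 1) := by
      rw [mul_div_assoc', le_div_iff₀ hR] at h
      linarith
    exact le_of_mul_le_mul_right key hA
  calc v = (v ^ (q - p + 1)) ^ (1 / (q - p + 1)) := by
        rw [← Real.rpow_mul hv.le, mul_one_div_cancel hθ.ne', Real.rpow_one]
    _ ≤ (K * c ^ (p - 1) * r ^ (-(γ + p))) ^ (1 / (q - p + 1)) := by gcongr
    _ = (K * c ^ (p - 1)) ^ (1 / (q - p + 1)) * r ^ (-(γ + p) / (q - p + 1)) := by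
        rw [Real.mul_rpow (by positivity) (by positivity), ← Real.rpow_mul hr.le, mul_one_div]

theorem le_mul_rpow_of_mul_le_of_rpow_mul_le {d v r c K p q γ : ℝ} (hd : 0 ≤ d) (hv : 0 < v)
    (hr : 0 < r) (hc : 0 ≤ c) (hK : 0 ≤ K) (hp : 1 < p) (hqp : p - 1 < q)
    (hdv : r * d ≤ c * v) (h : v ^ q * r ^ (γ + 1) ≤ K * d ^ (p - 1)) :
    d ≤ c * (K * c ^ (p - 1)) ^ (1 / (q - p + 1)) * r ^ (-(γ + q + 1) / (q - p + 1)) := by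
  have hd' : d ≤ c * v / r := by rw [le_div_iff₀ hr]; linarith
  have hv' := le_mul_rpow_of_rpow_mul_le hv hr hc hK hqp
    (h.trans (by gcongr))
  calc d ≤ c * v / r := hd'
    _ ≤ c * ((K * c ^ (p - 1)) ^ (1 / (q - p + 1)) * r ^ (-(γ + p) / (q - p + 1))) / r := by
        gcongr
    _ = c * (K * c ^ (p - 1)) ^ (1 / (q - p + 1)) * r ^ (-(γ + q + 1) / (q - p + 1)) := by
        rw [show -(γ + q + 1) / (q - p + 1) = -(γ + p) / (q - p + 1) - 1 by
          field_simp [(by linarith : q - p + 1 ≠ 0)]; ring, Real.rpow_sub hr, Real.rpow_one]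
        ring

section RadialSolution

variable {m γ q p : ℝ} {V : ℝ → ℝ}

theorem flux_eq_weightedMass (hmγ : 0 ≤ m + γ) (hq : 0 ≤ q)
    (hV₀ : ∀ r, 0 ≤ r → 0 < V r) (hV : AntitoneOn V (Ici 0)) {r : ℝ} (hr : 0 < r)
    (heq : r ^ m * |deriv V r| ^ (p - 2) * deriv V r = -weightedMass (m + γ) q V r) :
    r ^ m * |deriv V r| ^ (p - 1) = weightedMass (m + γ) q V r := by
  have hmass : 0 < weightedMass (m + γ) q V r := by
    refine lt_of_lt_of_le ?_ (rpow_mul_rpow_div_le_weightedMass hmγ hq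
      (fun x hx => (hV₀ x hx).le) hV hr.le)
    have := hV₀ r hr.le
    positivity
  exact mul_abs_rpow_eq_of_mul_abs_rpow_mul_eq_neg (Real.rpow_pos_of_pos hr m) hmass heq

theorem rpow_mul_rpow_le_mul_abs_deriv_rpow (hmγ : 0 ≤ m + γ) (hq : 0 ≤ q)
    (hV₀ : ∀ r, 0 ≤ r → 0 ≤ V r) (hV : AntitoneOn V (Ici 0)) {r : ℝ} (hr : 0 < r)
    (hflux : r ^ m * |deriv V r| ^ (p - 1) = weightedMass (m + γ) q V r) :
    V r ^ q * r ^ (γ + 1) ≤ (m + γ + 1) * |deriv V r| ^ (p - 1) := by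
  have hlow := rpow_mul_rpow_div_le_weightedMass hmγ hq hV₀ hV hr.le
  rw [← hflux, add_assoc, Real.rpow_add hr, mul_div_assoc',
    div_le_iff₀ (by linarith)] at hlow
  rw [add_assoc]
  have hrm : 0 < r ^ m := Real.rpow_pos_of_pos hr m
  nlinarith

end RadialSolution

/-- Derivative decay estimate for radial solutions: if `V > 0`, `V` nonincreasing,
`q ≥ (N+γ)(p-1)/(N-p)` and `r^{N-1}|V'|^{p-2}V' = -∫₀^r s^{N-1+γ}V^q`, then
`|V'(r)| ≤ C r^{-(γ+q+1)/(q-p+1)}`. -/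
theorem radial_solution_derivative_decay
    (N : ℕ) (p γ q : ℝ) (hp : 1 < p) (hpN : p < N) (hγ : 0 ≤ γ)
    (hq : ((N : ℝ) + γ) * (p - 1) / ((N : ℝ) - p) ≤ q)
    (V : ℝ → ℝ)
    (hVpos : ∀ r : ℝ, 0 ≤ r → 0 < V r)
    (hV : ContDiffOn ℝ 1 V (Set.Ioi (0 : ℝ)))
    (hmono : AntitoneOn V (Set.Ici (0 : ℝ)))
    (heq : ∀ r : ℝ, 0 < r →
      r ^ ((N : ℝ) - 1) * |deriv V r| ^ (p - 2) * deriv V r =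
        -∫ s in (0 : ℝ)..r, s ^ ((N : ℝ) - 1 + γ) * V s ^ q) :
    ∃ C : ℝ, 0 < C ∧ ∀ r : ℝ, 0 < r →
      |deriv V r| ≤ C * r ^ (-(γ + q + 1) / (q - p + 1)) := by
  have hm : (0 : ℝ) ≤ N - 1 := by linarith
  have hqp : p - 1 < q := by
    refine lt_of_lt_of_le ?_ hq
    rw [lt_div_iff₀ (by linarith)]
    nlinarith
  have hq₀ : 0 ≤ q := by linarith
  have hV₀ : ∀ r, 0 ≤ r → 0 ≤ V r := fun r hr => (hVpos r hr).le
  have hflux : ∀ r, 0 < r → r ^ ((N : ℝ) - 1) * |deriv V r| ^ (p - 1) =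
      weightedMass ((N : ℝ) - 1 + γ) q V r := fun r hr =>
    flux_eq_weightedMass (by linarith) hq₀ hVpos hmono hr (heq r hr)
  have hflux_mono : MonotoneOn (fun s => s ^ ((N : ℝ) - 1) * |deriv V s| ^ (p - 1)) (Ioi 0) :=
    fun r hr s hs hrs => by
      simp only [hflux r hr, hflux s hs]
      exact weightedMass_monotoneOn (by linarith) hq₀ hV₀ hmono
        (mem_Ici.2 (le_of_lt hr)) (mem_Ici.2 (le_of_lt hs)) hrs
  set c : ℝ := 2 ^ (((N : ℝ) - 1) / (p - 1))
  set K : ℝ := (N : ℝ) - 1 + γ + 1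
  refine ⟨c * (K * c ^ (p - 1)) ^ (1 / (q - p + 1)), by positivity, fun r hr => ?_⟩
  have hdoubling := mul_abs_deriv_le_of_monotoneOn_flux hm hp (hV.differentiableOn one_ne_zero)
    hV₀ hmono hflux_mono hr
  have hlower := rpow_mul_rpow_le_mul_abs_deriv_rpow (by linarith) hq₀ hV₀ hmono hr (hflux r hr)
  exact le_mul_rpow_of_mul_le_of_rpow_mul_le (abs_nonneg _) (hVpos r hr.le) hr (by positivity)
    (by linarith) hp hqp hdoubling hlower
end
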